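/- For all integers m ≥ 1, the two representations of Binet's coefficients agree: (1/m)·∫_0^1 (u − 1/2)·u·∏_{k=1}^{m−1}(k−u) du = ((−1)^{m−1}/(2m))·∑_{k=1}^m k·S_m^{(k)}/((k+2)(k+1)), where S_m^{(k)} are the Stirling numbers of the first kind. -/

import Mathlib

/-- The coefficients of Binet's second factorial series. -/
noncomputable def binetC (m : ℕ) : ℝ :=
  (1 / (m : ℝ)) * ∫ u in (0:ℝ)..1, (u - 1/2) * u * ∏ k ∈ Finset.Icc 1 (m - 1), ((k : ℝ) - u)

/-- Signed Stirling numbers of the first kind, defined by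
`∏_{i=0}^{m−1}(x − i) = ∑_{k=0}^m S_m^{(k)} x^k`. -/
noncomputable def stirlingFirst (m k : ℕ) : ℝ :=
  (∏ i ∈ Finset.range m, (Polynomial.X - Polynomial.C (i : ℝ))).coeff k

/-! The integrand is `(-1)^(m-1) (u - 1/2)` times the falling factorial `u(u-1)⋯(u-m+1)`, whose
coefficients are the Stirling numbers; integrating termwise with
`∫₀¹ (u - 1/2) uᵏ du = k / (2(k+1)(k+2))` gives the sum. -/

open Finset Polynomial intervalIntegral

theorem stirlingFirst_eq_coeff_descPochhammer (m k : ℕ) :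
    stirlingFirst m k = (descPochhammer ℝ m).coeff k := by
  suffices ∏ i ∈ range m, (X - C (i : ℝ)) = descPochhammer ℝ m by rw [stirlingFirst, this]
  induction m with
  | zero => simp
  | succ n ih => rw [prod_range_succ, ih, descPochhammer_succ_right, map_natCast]

theorem mul_prod_Icc_natCast_sub_eq (n : ℕ) (u : ℝ) :
    u * ∏ k ∈ Icc 1 n, ((k : ℝ) - u) = (-1) ^ n * (descPochhammer ℝ (n + 1)).eval u := by
  induction n with
  | zero => simp
  | succ n ih =>
    rw [prod_Icc_succ_top (by omega), ← mul_assoc, ih, descPochhammer_succ_right ℝ (n + 1)]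
    simp only [eval_mul, eval_sub, eval_X, eval_natCast]
    ring

theorem integral_sub_half_mul_pow (k : ℕ) :
    ∫ u in (0 : ℝ)..1, (u - 1 / 2) * u ^ k = (k : ℝ) / ((k + 2) * (k + 1)) / 2 := by
  have hsplit : (fun u : ℝ ↦ (u - 1 / 2) * u ^ k) = fun u ↦ u ^ (k + 1) - 1 / 2 * u ^ k := by
    ext u; ring
  rw [hsplit, integral_sub (intervalIntegrable_pow _) ((intervalIntegrable_pow _).const_mul _),
    integral_const_mul, integral_pow, integral_pow]
  push_cast
  field_simp
  ring

theorem integral_sub_half_mul_eval {p : ℝ[X]} {n : ℕ} (hp : p.natDegree ≤ n) :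
    ∫ u in (0 : ℝ)..1, (u - 1 / 2) * p.eval u =
      (1 / 2) * ∑ k ∈ Icc 1 n, (k : ℝ) * p.coeff k / ((k + 2) * (k + 1)) := by
  have hexpand : (fun u ↦ (u - 1 / 2) * p.eval u) =
      fun u ↦ ∑ k ∈ range (n + 1), p.coeff k * ((u - 1 / 2) * u ^ k) := by
    ext u
    rw [eval_eq_sum_range' (Nat.lt_succ_of_le hp), mul_sum]
    exact sum_congr rfl fun k _ ↦ by ring
  rw [hexpand, integral_finsetSum fun k _ ↦ (by fun_prop : Continuous _).intervalIntegrable _ _]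
  simp only [integral_const_mul, integral_sub_half_mul_pow]
  rw [range_eq_Ico, sum_eq_sum_Ico_succ_bot (Nat.succ_pos n), mul_sum]
  simp only [Nat.cast_zero, zero_div, mul_zero, zero_add]
  exact sum_congr rfl fun k _ ↦ by ring

theorem binetC_eq_stirling_sum (m : ℕ) (hm : 1 ≤ m) :
    binetC m = ((-1 : ℝ) ^ (m - 1) / (2 * m)) *
      ∑ k ∈ Finset.Icc 1 m, (k : ℝ) * stirlingFirst m k / (((k : ℝ) + 2) * ((k : ℝ) + 1)) := by
  obtain ⟨n, rfl⟩ := Nat.exists_eq_add_of_le' hm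
  have hintegrand : ∀ u : ℝ, (u - 1 / 2) * u * ∏ k ∈ Icc 1 n, ((k : ℝ) - u) =
      (-1) ^ n * ((u - 1 / 2) * (descPochhammer ℝ (n + 1)).eval u) := by
    intro u
    rw [mul_assoc, mul_prod_Icc_natCast_sub_eq]
    ring
  simp only [binetC, stirlingFirst_eq_coeff_descPochhammer, Nat.add_sub_cancel, hintegrand,
    integral_const_mul, integral_sub_half_mul_eval (descPochhammer_natDegree ℝ (n + 1)).le]
  ring
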